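/- arXiv:2405.04952 — 2 statements merged into one kernel-verified Lean document; each statement's English description precedes it below -/
import Mathlib

section
/- (Cost transfer after pruning a collinear vertex, Case 2.1.) Let x_c, x_a, x_d, x_e, x_j ∈ ℝ² and costs g_c, g_d ≥ 0. Suppose x_j lies on the segment from x_c to x_a, x_e lies on the segment from x_d to x_j, and g_c + dist(x_c, x_a) < (g_d + dist(x_d, x_e)) + dist(x_e, x_a). Then g_c + dist(x_c, x_j) < g_d + dist(x_d, x_j). -/
theorem wbtw_add_smul_sub {R V : Type*} [Ring R] [PartialOrder R] [AddCommGroup V] [Module R V]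
    {x z : V} {t : R} (ht0 : 0 ≤ t) (ht1 : t ≤ 1) : Wbtw R x (x + t • (z - x)) z :=
  ⟨t, ⟨ht0, ht1⟩, by rw [AffineMap.lineMap_apply_module', add_comm]⟩

theorem add_dist_lt_add_dist_of_wbtw {V P : Type*} [NormedAddCommGroup V] [NormedSpace ℝ V]
    [PseudoMetricSpace P] [NormedAddTorsor V P] {c a d e j : P} {gc gd : ℝ}
    (hj : Wbtw ℝ c j a) (he : Wbtw ℝ d e j) (h : gc + dist c a < gd + dist d e + dist e a) :
    gc + dist c j < gd + dist d j :=
  calc gc + dist c j = gc + dist c a - dist j a := by rw [← hj.dist_add_dist]; ring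
    _ < gd + dist d e + dist e a - dist j a := by gcongr
    _ ≤ gd + dist d e + (dist e j + dist j a) - dist j a := by gcongr; exact dist_triangle e j a
    _ = gd + dist d j := by rw [← he.dist_add_dist]; ring

theorem cost_transfer_pruned_collinear_general
    (xc xa xd xe xj : EuclideanSpace ℝ (Fin 2)) (gc gd : ℝ)
    (t : ℝ) (ht0 : 0 ≤ t) (ht1 : t ≤ 1)
    (hxj : xj = xc + t • (xa - xc))
    (s : ℝ) (hs0 : 0 ≤ s) (hs1 : s ≤ 1)
    (hxe : xe = xd + s • (xj - xd))
    (h : gc + dist xc xa < (gd + dist xd xe) + dist xe xa) :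
    gc + dist xc xj < gd + dist xd xj := by
  have hj : Wbtw ℝ xc xj xa := hxj ▸ wbtw_add_smul_sub ht0 ht1
  have he : Wbtw ℝ xd xe xj := hxe ▸ wbtw_add_smul_sub hs0 hs1
  exact add_dist_lt_add_dist_of_wbtw hj he h

theorem cost_transfer_pruned_collinear
    (xc xa xd xe xj : EuclideanSpace ℝ (Fin 2)) (gc gd : ℝ)
    (hgc : 0 ≤ gc) (hgd : 0 ≤ gd)
    (t : ℝ) (ht0 : 0 ≤ t) (ht1 : t ≤ 1)
    (hxj : xj = xc + t • (xa - xc))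
    (s : ℝ) (hs0 : 0 ≤ s) (hs1 : s ≤ 1)
    (hxe : xe = xd + s • (xj - xd))
    (h : gc + dist xc xa < (gd + dist xd xe) + dist xe xa) :
    gc + dist xc xj < gd + dist xd xj :=
  cost_transfer_pruned_collinear_general xc xa xd xe xj gc gd t ht0 ht1 hxj s hs0 hs1 hxe h
end

section
/- (Cost transfer through an intersecting detour.) Let x_c, x_e, x_a, y ∈ ℝ², g_c, g_e ≥ 0 with g_c + dist(x_c, x_a) < g_e + dist(x_e, x_a). If x_i lies on the segment from x_c to x_a and also on the segment from x_e to y, then the path cost g_e + dist(x_e, y) satisfies g_e + dist(x_e, y) > g_c + dist(x_c, x_i) + dist(x_i, y). -/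
/-! The cheaper cost-to-come at `xa` through `xc` passes through `xi` on its way, so it also
undercuts, at `xi`, the cost of any path from `xe` through `xi`: otherwise the triangle
inequality `dist xe xa ≤ dist xe xi + dist xi xa` would make `xe` the cheaper way to `xa`. -/

theorem wbtw_of_eq_add_smul_sub {E : Type*} [AddCommGroup E] [Module ℝ E] {x y z : E} {t : ℝ}
    (ht0 : 0 ≤ t) (ht1 : t ≤ 1) (hz : z = x + t • (y - x)) : Wbtw ℝ x z y := by
  rw [← mem_segment_iff_wbtw, segment_eq_image']
  exact ⟨t, ⟨ht0, ht1⟩, hz.symm⟩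

theorem add_dist_add_dist_lt_of_wbtw {E P : Type*} [SeminormedAddCommGroup E] [NormedSpace ℝ E]
    [PseudoMetricSpace P] [NormedAddTorsor E P] {xc xe xa y xi : P} {gc ge : ℝ}
    (h : gc + dist xc xa < ge + dist xe xa) (hc : Wbtw ℝ xc xi xa) (he : Wbtw ℝ xe xi y) :
    gc + dist xc xi + dist xi y < ge + dist xe y := by
  have hca := hc.dist_add_dist
  have hey := he.dist_add_dist
  have := dist_triangle xe xi xa
  linarith

theorem cost_transfer_intersecting_detour_general
    (xc xe xa y xi : EuclideanSpace ℝ (Fin 2)) (gc ge : ℝ)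
    (h : gc + dist xc xa < ge + dist xe xa)
    (t : ℝ) (ht0 : 0 ≤ t) (ht1 : t ≤ 1)
    (hxi : xi = xc + t • (xa - xc))
    (s : ℝ) (hs0 : 0 ≤ s) (hs1 : s ≤ 1)
    (hxi' : xi = xe + s • (y - xe)) :
    ge + dist xe y > gc + dist xc xi + dist xi y :=
  add_dist_add_dist_lt_of_wbtw h (wbtw_of_eq_add_smul_sub ht0 ht1 hxi)
    (wbtw_of_eq_add_smul_sub hs0 hs1 hxi')

theorem cost_transfer_intersecting_detour
    (xc xe xa y xi : EuclideanSpace ℝ (Fin 2)) (gc ge : ℝ)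
    (hgc : 0 ≤ gc) (hge : 0 ≤ ge)
    (h : gc + dist xc xa < ge + dist xe xa)
    (t : ℝ) (ht0 : 0 ≤ t) (ht1 : t ≤ 1)
    (hxi : xi = xc + t • (xa - xc))
    (s : ℝ) (hs0 : 0 ≤ s) (hs1 : s ≤ 1)
    (hxi' : xi = xe + s • (y - xe)) :
    ge + dist xe y > gc + dist xc xi + dist xi y :=
  cost_transfer_intersecting_detour_general xc xe xa y xi gc ge h t ht0 ht1 hxi s hs0 hs1 hxi'
end
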